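/- arXiv:1710.09704 — 5 statements merged into one kernel-verified Lean document; each statement's English description precedes it below -/
import Mathlib

section
/- Let 0<q<1, let z∈ℂ satisfy (1-q)|z|² < 1, and let ξ ∈ I_q := (-√2/√(1-q), √2/√(1-q)). Then ∑_{j=0}^∞ conj(z)^j (1-q)^{j/2}/√((q;q)_j) · φ_j^q(ξ) = ( √2·ω_q(√2 ξ) )^{1/2} · ∏_{k=0}^∞ ( 1 - √2·conj(z)·ξ·q^k(1-q) + conj(z)²·q^{2k}(1-q) )^{-1}. (Corollary 1.1: wave function of the coherent state for m=0, before normalization by e_q(|z|²)^{-1/2}.) -/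
open Filter Finset MeasureTheory Topology

noncomputable section

/-- Finite q-Pochhammer symbol `(a;q)_n` in `ℂ`. -/
def qPochC (a q : ℂ) (n : ℕ) : ℂ := ∏ k ∈ Finset.range n, (1 - a * q ^ k)

/-- Infinite q-Pochhammer symbol `(a;q)_∞` in `ℂ`. -/
def qPochCInf (a q : ℂ) : ℂ := ∏' k : ℕ, (1 - a * q ^ k)

/-- Finite q-Pochhammer symbol `(a;q)_n` in `ℝ`. -/
def qPochR (a q : ℝ) (n : ℕ) : ℝ := ∏ k ∈ Finset.range n, (1 - a * q ^ k)

/-- Infinite q-Pochhammer symbol `(a;q)_∞` in `ℝ`. -/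
def qPochRInf (a q : ℝ) : ℝ := ∏' k : ℕ, (1 - a * q ^ k)

/-- Wall polynomial `P_n(x;a|q)`. -/
def wallP (n : ℕ) (x a q : ℂ) : ℂ :=
  ∑ k ∈ Finset.range (n + 1),
    qPochC (q ^ (-(n : ℤ))) q k / (qPochC (a * q) q k * qPochC q q k) * (q * x) ^ k

/-- The coefficients `h_j^{m,q}(z)`. -/
def hcoef (q : ℝ) (m j : ℕ) (z : ℂ) : ℂ :=
  (-1 : ℂ) ^ (min m j) * (q : ℂ) ^ ((min m j).choose 2) * qPochC (q : ℂ) (q : ℂ) (max m j)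
    * (Real.sqrt (1 - q) : ℂ) ^ (Nat.dist m j)
    / (qPochC (q : ℂ) (q : ℂ) (Nat.dist m j)
        * (Real.sqrt (q ^ (m * j) * qPochR q q m * qPochR q q j) : ℂ))
    * (if j ≤ m then (starRingEnd ℂ) z ^ (m - j) else z ^ (j - m))
    * wallP (min m j) (((1 - q) * ‖z‖ ^ 2 : ℝ) : ℂ) ((q : ℂ) ^ (Nat.dist m j)) (q : ℂ)

/-- The weight `ω_q(u)`. -/
def omegaq (q u : ℝ) : ℝ :=
  qPochRInf q q * Real.sqrt (1 - q) / (4 * Real.pi * Real.sqrt (1 - (1 - q) * u ^ 2 / 4))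
    * ∏' k : ℕ, (1 + (2 - u ^ 2 * (1 - q)) * q ^ k + q ^ (2 * k))

/-- Continuous q-Hermite polynomial `H_n(x|q)` for `x ∈ [-1,1]`, via `x = cos θ`. -/
def qHermite (n : ℕ) (x q : ℝ) : ℝ :=
  ∑ k ∈ Finset.range (n + 1),
    qPochR q q n / (qPochR q q k * qPochR q q (n - k))
      * Real.cos (((n : ℝ) - 2 * k) * Real.arccos x)

/-- The q-deformed Hermite functions `φ_j^q(ξ)`. -/
def phiq (q : ℝ) (j : ℕ) (ξ : ℝ) : ℝ :=
  Real.sqrt (Real.sqrt 2 * omegaq q (Real.sqrt 2 * ξ) / qPochR q q j)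
    * qHermite j (Real.sqrt ((1 - q) / 2) * ξ) q

/-- Al-Salam–Chihara polynomial `Q_m(x;a,b|q)` for `x ∈ [-1,1]`, via `x = cos θ`. -/
def alSalamChihara (m : ℕ) (x : ℝ) (a b q : ℂ) : ℂ :=
  qPochC (a * b) q m / a ^ m *
    ∑ k ∈ Finset.range (m + 1),
      qPochC (q ^ (-(m : ℤ))) q k
        * qPochC (a * Complex.exp ((Real.arccos x : ℂ) * Complex.I)) q k
        * qPochC (a * Complex.exp (-((Real.arccos x : ℂ) * Complex.I))) q k
        / (qPochC (a * b) q k * qPochC q q k) * (q : ℂ) ^ k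

/-- The interval `I_q = (-√2/√(1-q), √2/√(1-q))`. -/
def Iq (q : ℝ) : Set ℝ :=
  Set.Ioo (-(Real.sqrt 2 / Real.sqrt (1 - q))) (Real.sqrt 2 / Real.sqrt (1 - q))

/-!
With `t = z̄ √(1-q)` and `x = cos θ = √((1-q)/2) ξ ∈ [-1, 1]`, the series is `√(√2 ω_q(√2 ξ))`
times the Rogers generating function `∑ tⁿ Hₙ(x|q) / (q;q)ₙ`. Because
`Hₙ(cos θ|q) = ∑ₖ [n,k]_q e^{i(n-2k)θ}`, that series is the Cauchy product of the Euler series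
`e_q(s) = ∑ sⁿ / (q;q)ₙ = 1 / (s;q)_∞` at `s = t e^{±iθ}`, and
`(1 - t e^{iθ} qᵏ)(1 - t e^{-iθ} qᵏ) = 1 - 2 x t qᵏ + t² q²ᵏ`.
Euler's identity follows from `(1 - s) e_q(s) = e_q(q s)`: iterating gives
`(s;q)_N e_q(s) = e_q(qᴺ s) → e_q(0) = 1`.
-/

open Complex (exp I)

def qExp (q : ℝ) (t : ℂ) : ℂ := ∑' n : ℕ, t ^ n / (qPochR q q n : ℂ)

section Euler

variable {q : ℝ}

lemma qPochR_succ (a q : ℝ) (n : ℕ) : qPochR a q (n + 1) = qPochR a q n * (1 - a * q ^ n) :=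
  prod_range_succ _ n

lemma one_sub_mul_pow_pos (hq : |q| < 1) (n : ℕ) : 0 < 1 - q * q ^ n := by
  have : |q ^ (n + 1)| < 1 := by
    rw [abs_pow]; exact pow_lt_one₀ (abs_nonneg q) hq n.succ_ne_zero
  rw [← pow_succ']
  linarith [le_abs_self (q ^ (n + 1))]

lemma qPochR_pos (hq : |q| < 1) (n : ℕ) : 0 < qPochR q q n :=
  prod_pos fun k _ => one_sub_mul_pow_pos hq k

lemma norm_pow_div_qPochR (hq : |q| < 1) (t : ℂ) (n : ℕ) :
    ‖t ^ n / (qPochR q q n : ℂ)‖ = ‖t‖ ^ n / qPochR q q n := by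
  rw [norm_div, norm_pow, Complex.norm_real, Real.norm_of_nonneg (qPochR_pos hq n).le]

lemma pow_succ_div_qPochR (hq : |q| < 1) (t : ℂ) (n : ℕ) :
    t ^ (n + 1) / (qPochR q q (n + 1) : ℂ)
      = t / (1 - q * q ^ n : ℝ) * (t ^ n / (qPochR q q n : ℂ)) := by
  have h₁ : (qPochR q q n : ℂ) ≠ 0 := by exact_mod_cast (qPochR_pos hq n).ne'
  have h₂ : ((1 - q * q ^ n : ℝ) : ℂ) ≠ 0 := by exact_mod_cast (one_sub_mul_pow_pos hq n).ne'
  rw [qPochR_succ, Complex.ofReal_mul]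
  field_simp
  ring

lemma norm_ofReal_pow_mul_le (hq : |q| ≤ 1) (t : ℂ) (N : ℕ) : ‖(q : ℂ) ^ N * t‖ ≤ ‖t‖ := by
  rw [norm_mul, norm_pow, Complex.norm_real, Real.norm_eq_abs]
  exact mul_le_of_le_one_left (norm_nonneg t) (pow_le_one₀ (abs_nonneg q) hq)

lemma summable_norm_pow_div_qPochR (hq : |q| < 1) {t : ℂ} (ht : ‖t‖ < 1) :
    Summable fun n : ℕ => ‖t ^ n / (qPochR q q n : ℂ)‖ := by
  obtain ⟨r, htr, hr1⟩ := exists_between ht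
  have hratio : Tendsto (fun n : ℕ => ‖t‖ / (1 - q * q ^ n)) atTop (𝓝 ‖t‖) := by
    have h : Tendsto (fun n : ℕ => 1 - q * q ^ n) atTop (𝓝 1) := by
      simpa using
        tendsto_const_nhds.sub ((tendsto_pow_atTop_nhds_zero_of_abs_lt_one hq).const_mul q)
    have h' : Tendsto (fun n : ℕ => ‖t‖ / (1 - q * q ^ n)) atTop (𝓝 (‖t‖ / 1)) :=
      tendsto_const_nhds.div h one_ne_zero
    rwa [div_one] at h'
  refine summable_of_ratio_norm_eventually_le hr1 ?_
  filter_upwards [hratio.eventually_le_const htr] with n hn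
  rw [norm_norm, norm_norm, pow_succ_div_qPochR hq, norm_mul, norm_div, Complex.norm_real,
    Real.norm_of_nonneg (one_sub_mul_pow_pos hq n).le]
  exact mul_le_mul_of_nonneg_right hn (norm_nonneg _)

lemma summable_pow_div_qPochR (hq : |q| < 1) {t : ℂ} (ht : ‖t‖ < 1) :
    Summable fun n : ℕ => t ^ n / (qPochR q q n : ℂ) :=
  (summable_norm_pow_div_qPochR hq ht).of_norm

lemma qExp_zero : qExp q 0 = 1 := by
  rw [qExp, tsum_eq_single 0 fun n hn => by simp [zero_pow hn]]
  simp [qPochR]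

lemma qExp_q_mul (hq : |q| < 1) {t : ℂ} (ht : ‖t‖ < 1) :
    qExp q (q * t) = (1 - t) * qExp q t := by
  have hs := summable_pow_div_qPochR hq ht
  have hqt : ‖(q : ℂ) * t‖ < 1 := by simpa using (norm_ofReal_pow_mul_le hq.le t 1).trans_lt ht
  have hterm : ∀ n : ℕ, (q * t) ^ (n + 1) / (qPochR q q (n + 1) : ℂ)
      = t ^ (n + 1) / (qPochR q q (n + 1) : ℂ) - t * (t ^ n / (qPochR q q n : ℂ)) := by
    intro n
    have h₂ : ((1 - q * q ^ n : ℝ) : ℂ) ≠ 0 := by exact_mod_cast (one_sub_mul_pow_pos hq n).ne'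
    rw [pow_succ_div_qPochR hq, pow_succ_div_qPochR hq]
    field_simp
    push_cast
    ring
  rw [qExp, qExp, (summable_pow_div_qPochR hq hqt).tsum_eq_zero_add, hs.tsum_eq_zero_add,
    tsum_congr hterm, ((summable_nat_add_iff 1).2 hs).tsum_sub (hs.mul_left t), tsum_mul_left,
    hs.tsum_eq_zero_add]
  ring

lemma prod_range_mul_qExp (hq : |q| < 1) {t : ℂ} (ht : ‖t‖ < 1) (N : ℕ) :
    (∏ k ∈ range N, (1 - t * q ^ k)) * qExp q t = qExp q (q ^ N * t) := by
  induction N with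
  | zero => simp
  | succ N ih =>
    rw [prod_range_succ, mul_right_comm, ih, pow_succ', mul_assoc,
      qExp_q_mul hq ((norm_ofReal_pow_mul_le hq.le t N).trans_lt ht)]
    ring

lemma tendsto_qExp_pow_mul (hq : |q| < 1) {t : ℂ} (ht : ‖t‖ < 1) :
    Tendsto (fun N : ℕ => qExp q (q ^ N * t)) atTop (𝓝 1) := by
  rw [← qExp_zero (q := q)]
  refine tendsto_tsum_of_dominated_convergence (summable_norm_pow_div_qPochR hq ht)
    (fun n => ?_) (Eventually.of_forall fun N n => ?_)
  · have h : Tendsto (fun N : ℕ => (q : ℂ) ^ N * t) atTop (𝓝 0) := by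
      simpa using (tendsto_pow_atTop_nhds_zero_of_norm_lt_one
        (by rwa [Complex.norm_real, Real.norm_eq_abs])).mul_const t
    exact ((h.pow n).div_const _)
  · rw [norm_pow_div_qPochR hq, norm_pow_div_qPochR hq]
    gcongr
    exacts [(qPochR_pos hq n).le, norm_ofReal_pow_mul_le hq.le t N]

lemma multipliable_one_sub_mul_pow (hq : |q| < 1) (t : ℂ) :
    Multipliable fun k : ℕ => 1 - t * (q : ℂ) ^ k := by
  simp_rw [sub_eq_add_neg]
  refine multipliable_one_add_of_summable ?_
  simpa [norm_mul, norm_pow, Complex.norm_real] using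
    (summable_geometric_of_lt_one (abs_nonneg q) hq).mul_left ‖t‖

theorem tprod_one_sub_mul_pow_mul_qExp_eq_one (hq : |q| < 1) {t : ℂ} (ht : ‖t‖ < 1) :
    (∏' k : ℕ, (1 - t * (q : ℂ) ^ k)) * qExp q t = 1 :=
  tendsto_nhds_unique
    (((multipliable_one_sub_mul_pow hq t).hasProd.tendsto_prod_nat.mul_const _).congr
      (prod_range_mul_qExp hq ht))
    (tendsto_qExp_pow_mul hq ht)

theorem hasSum_pow_div_qPochR (hq : |q| < 1) {t : ℂ} (ht : ‖t‖ < 1) :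
    HasSum (fun n : ℕ => t ^ n / (qPochR q q n : ℂ)) (∏' k : ℕ, (1 - t * (q : ℂ) ^ k))⁻¹ := by
  rw [inv_eq_of_mul_eq_one_right (tprod_one_sub_mul_pow_mul_qExp_eq_one hq ht)]
  exact (summable_pow_div_qPochR hq ht).hasSum

end Euler

section Rogers

variable {q : ℝ}

lemma sum_mul_exp_eq_sum_mul_cos {n : ℕ} (c : ℕ → ℝ) (hc : ∀ k ≤ n, c (n - k) = c k) (θ : ℝ) :
    ∑ k ∈ range (n + 1), (c k : ℂ) * exp ((((n : ℝ) - 2 * k) * θ : ℝ) * I)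
      = ((∑ k ∈ range (n + 1), c k * Real.cos (((n : ℝ) - 2 * k) * θ) : ℝ) : ℂ) := by
  set S := ∑ k ∈ range (n + 1), (c k : ℂ) * exp ((((n : ℝ) - 2 * k) * θ : ℝ) * I)
  have hreflect : S = ∑ k ∈ range (n + 1), (c k : ℂ) * exp (-(((n : ℝ) - 2 * k) * θ : ℝ) * I) := by
    rw [← sum_range_reflect]
    refine sum_congr rfl fun k hk => ?_
    have hkn : k ≤ n := Nat.lt_succ_iff.1 (mem_range.1 hk)
    rw [Nat.add_sub_cancel, hc k hkn, Nat.cast_sub hkn]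
    push_cast
    ring_nf
  refine mul_left_cancel₀ (two_ne_zero (α := ℂ)) ?_
  rw [two_mul]
  nth_rewrite 2 [hreflect]
  rw [← sum_add_distrib]
  push_cast
  rw [mul_sum]
  refine sum_congr rfl fun k _ => ?_
  rw [Complex.cos]
  ring

lemma sum_range_mul_eq_pow_div_qPochR_mul_qHermite (hq : |q| < 1) (t : ℂ) (x : ℝ) (n : ℕ) :
    ∑ k ∈ range (n + 1),
        (t * exp (-(Real.arccos x * I))) ^ k / (qPochR q q k : ℂ)
          * ((t * exp (Real.arccos x * I)) ^ (n - k) / (qPochR q q (n - k) : ℂ))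
      = t ^ n / (qPochR q q n : ℂ) * qHermite n x q := by
  have hP : ∀ m, (qPochR q q m : ℂ) ≠ 0 := fun m => by exact_mod_cast (qPochR_pos hq m).ne'
  rw [qHermite, ← sum_mul_exp_eq_sum_mul_cos, mul_sum]
  · refine sum_congr rfl fun k hk => ?_
    have hkn : k ≤ n := Nat.lt_succ_iff.1 (mem_range.1 hk)
    have hexp : exp (-(Real.arccos x * I)) ^ k * exp (Real.arccos x * I) ^ (n - k)
        = exp ((((n : ℝ) - 2 * k) * Real.arccos x : ℝ) * I) := by
      rw [← Complex.exp_nat_mul, ← Complex.exp_nat_mul, ← Complex.exp_add, Nat.cast_sub hkn]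
      push_cast
      ring_nf
    have htn : t ^ k * t ^ (n - k) = t ^ n := by rw [← pow_add, Nat.add_sub_cancel' hkn]
    rw [mul_pow, mul_pow, ← htn, ← hexp]
    push_cast
    field_simp
    rw [mul_div_mul_right _ _ (hP n)]
  · intro k hk
    rw [Nat.sub_sub_self hk, mul_comm (qPochR q q (n - k))]

lemma one_sub_mul_exp_mul_one_sub_mul_exp (θ : ℝ) (w : ℂ) :
    (1 - w * exp (-(θ * I))) * (1 - w * exp (θ * I)) = 1 - 2 * Real.cos θ * w + w ^ 2 := by
  have h : exp (-(θ * I)) * exp (θ * I) = 1 := by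
    rw [Complex.exp_neg, inv_mul_cancel₀ (Complex.exp_ne_zero _)]
  rw [Complex.ofReal_cos, Complex.cos, neg_mul]
  linear_combination w ^ 2 * h

theorem hasSum_pow_div_qPochR_mul_qHermite (hq : |q| < 1) {t : ℂ} (ht : ‖t‖ < 1) {x : ℝ}
    (hx : x ∈ Set.Icc (-1) 1) :
    HasSum (fun n : ℕ => t ^ n / (qPochR q q n : ℂ) * qHermite n x q)
      (∏' k : ℕ, (1 - 2 * x * t * (q : ℂ) ^ k + t ^ 2 * (q : ℂ) ^ (2 * k))⁻¹) := by
  set θ := Real.arccos x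
  have hnorm : ∀ s : ℝ, ‖t * exp (s * I)‖ < 1 := fun s => by
    rwa [norm_mul, Complex.norm_exp_ofReal_mul_I, mul_one]
  have hA := hnorm θ
  have hB : ‖t * exp (-(θ * I))‖ < 1 := by simpa using hnorm (-θ)
  have hmB := multipliable_one_sub_mul_pow hq (t * exp (-(θ * I)))
  have hmA := multipliable_one_sub_mul_pow hq (t * exp (θ * I))
  have hne : ∏' k : ℕ, (1 - t * exp (-(θ * I)) * (q : ℂ) ^ k) * (1 - t * exp (θ * I) * (q : ℂ) ^ k)
      ≠ 0 := by
    rw [hmB.tprod_mul hmA]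
    exact mul_ne_zero (left_ne_zero_of_mul_eq_one (tprod_one_sub_mul_pow_mul_qExp_eq_one hq hB))
      (left_ne_zero_of_mul_eq_one (tprod_one_sub_mul_pow_mul_qExp_eq_one hq hA))
  have hcauchy := hasSum_sum_range_mul_of_summable_norm (summable_norm_pow_div_qPochR hq hB)
    (summable_norm_pow_div_qPochR hq hA)
  rw [(hasSum_pow_div_qPochR hq hB).tsum_eq, (hasSum_pow_div_qPochR hq hA).tsum_eq, ← mul_inv,
    ← hmB.tprod_mul hmA, ← (hmB.mul hmA).tprod_inv₀ hne] at hcauchy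
  have hfactor : ∀ k : ℕ,
      (1 - t * exp (-(θ * I)) * (q : ℂ) ^ k) * (1 - t * exp (θ * I) * (q : ℂ) ^ k)
        = 1 - 2 * x * t * (q : ℂ) ^ k + t ^ 2 * (q : ℂ) ^ (2 * k) := fun k => by
    have h := one_sub_mul_exp_mul_one_sub_mul_exp θ (t * (q : ℂ) ^ k)
    rw [Real.cos_arccos hx.1 hx.2] at h
    linear_combination h
  simpa only [θ, sum_range_mul_eq_pow_div_qPochR_mul_qHermite hq, hfactor] using hcauchy

end Rogers

lemma abs_sqrt_mul_lt_one_of_mem_Iq {q ξ : ℝ} (hq1 : q < 1) (hξ : ξ ∈ Iq q) :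
    |Real.sqrt ((1 - q) / 2) * ξ| < 1 := by
  have hs : 0 < Real.sqrt (1 - q) := Real.sqrt_pos.2 (sub_pos.2 hq1)
  have h2 : 0 < Real.sqrt 2 := by positivity
  rw [Real.sqrt_div' _ zero_le_two, abs_mul, abs_of_pos (div_pos hs h2)]
  calc Real.sqrt (1 - q) / Real.sqrt 2 * |ξ|
      < Real.sqrt (1 - q) / Real.sqrt 2 * (Real.sqrt 2 / Real.sqrt (1 - q)) := by
        gcongr
        exact abs_lt.2 hξ
    _ = 1 := by field_simp

lemma two_mul_sqrt_half_mul_sqrt {a : ℝ} (ha : 0 ≤ a) :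
    2 * Real.sqrt (a / 2) * Real.sqrt a = Real.sqrt 2 * a := by
  rw [Real.sqrt_div' _ zero_le_two, mul_assoc, div_mul_eq_mul_div, Real.mul_self_sqrt ha]
  field_simp
  rw [Real.sq_sqrt zero_le_two]
  ring

lemma pow_div_sqrt_qPochR_mul_phiq {q : ℝ} (hq : |q| < 1) (w : ℂ) (j : ℕ) (ξ : ℝ) :
    w ^ j / ((Real.sqrt (qPochR q q j) : ℝ) : ℂ) * ((phiq q j ξ : ℝ) : ℂ)
      = ((Real.sqrt (Real.sqrt 2 * omegaq q (Real.sqrt 2 * ξ)) : ℝ) : ℂ)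
        * (w ^ j / (qPochR q q j : ℂ) * qHermite j (Real.sqrt ((1 - q) / 2) * ξ) q) := by
  have hP0 : Real.sqrt (qPochR q q j) ≠ 0 := (Real.sqrt_pos.2 (qPochR_pos hq j)).ne'
  have hP : (qPochR q q j : ℂ) = ((Real.sqrt (qPochR q q j) : ℝ) : ℂ) ^ 2 := by
    exact_mod_cast (Real.sq_sqrt (qPochR_pos hq j).le).symm
  rw [phiq, Real.sqrt_div' _ (qPochR_pos hq j).le, hP]
  push_cast
  field_simp

/-- Corollary 1.1: wave function of the coherent state for m = 0, before normalization. -/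
theorem coherent_state_m_zero (q : ℝ) (hq0 : 0 < q) (hq1 : q < 1) (z : ℂ)
    (hz2 : (1 - q) * ‖z‖ ^ 2 < 1) (ξ : ℝ) (hξ : ξ ∈ Iq q) :
    HasSum (fun j : ℕ =>
        (starRingEnd ℂ) z ^ j * ((Real.sqrt (1 - q) : ℝ) : ℂ) ^ j
          / ((Real.sqrt (qPochR q q j) : ℝ) : ℂ) * ((phiq q j ξ : ℝ) : ℂ))
      (((Real.sqrt (Real.sqrt 2 * omegaq q (Real.sqrt 2 * ξ)) : ℝ) : ℂ)
        * ∏' k : ℕ,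
            (1 - ((Real.sqrt 2 : ℝ) : ℂ) * (starRingEnd ℂ) z * (ξ : ℂ) * (q : ℂ) ^ k * ((1 - q : ℝ) : ℂ)
              + (starRingEnd ℂ) z ^ 2 * (q : ℂ) ^ (2 * k) * ((1 - q : ℝ) : ℂ))⁻¹) := by
  have h1q : 0 ≤ 1 - q := by linarith
  have hq : |q| < 1 := abs_lt.2 ⟨by linarith, hq1⟩
  have hs : ((Real.sqrt (1 - q) : ℝ) : ℂ) ^ 2 = 1 - q := by exact_mod_cast Real.sq_sqrt h1q
  have hsqrt : 2 * ((Real.sqrt ((1 - q) / 2) : ℝ) : ℂ) * ((Real.sqrt (1 - q) : ℝ) : ℂ)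
      = Real.sqrt 2 * (1 - q) := by exact_mod_cast two_mul_sqrt_half_mul_sqrt h1q
  set t : ℂ := starRingEnd ℂ z * ((Real.sqrt (1 - q) : ℝ) : ℂ)
  have ht : ‖t‖ < 1 := by
    have : ‖t‖ ^ 2 < 1 := by
      rwa [norm_mul, Complex.norm_conj, Complex.norm_real, Real.norm_of_nonneg (Real.sqrt_nonneg _),
        mul_pow, Real.sq_sqrt h1q, mul_comm]
    exact (pow_lt_one_iff_of_nonneg (norm_nonneg t) two_ne_zero).1 this
  have hx := abs_le.1 (abs_sqrt_mul_lt_one_of_mem_Iq hq1 hξ).le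
  have hfactor : ∀ k : ℕ,
      1 - 2 * ((Real.sqrt ((1 - q) / 2) * ξ : ℝ) : ℂ) * t * (q : ℂ) ^ k + t ^ 2 * (q : ℂ) ^ (2 * k)
      = 1 - ((Real.sqrt 2 : ℝ) : ℂ) * (starRingEnd ℂ) z * (ξ : ℂ) * (q : ℂ) ^ k * ((1 - q : ℝ) : ℂ)
          + (starRingEnd ℂ) z ^ 2 * (q : ℂ) ^ (2 * k) * ((1 - q : ℝ) : ℂ) := fun k => by
    push_cast
    linear_combination (-(starRingEnd ℂ z * ξ * (q : ℂ) ^ k)) * hsqrt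
      + (starRingEnd ℂ z ^ 2 * (q : ℂ) ^ (2 * k)) * hs
  simpa only [← mul_pow, pow_div_sqrt_qPochR_mul_phiq hq, hfactor] using
    (hasSum_pow_div_qPochR_mul_qHermite hq ht hx).mul_left
      ((Real.sqrt (Real.sqrt 2 * omegaq q (Real.sqrt 2 * ξ)) : ℝ) : ℂ)
end
end

section
/- Let m,j∈ℕ and z∈ℂ. Then lim_{q→1⁻} h_j^{m,q}(z) = (-1)^{min(m,j)} · (min(m,j))! / √(m!·j!) · c_{m,j}(z) · L_{min(m,j)}^{(|m-j|)}(|z|²), where c_{m,j}(z) = conj(z)^{m-j} if j ≤ m and c_{m,j}(z) = z^{j-m} if j > m, and L_n^{(α)} is the Laguerre polynomial L_n^{(α)}(x) = ∑_{k=0}^n (-1)^k/k! · binom(n+α, n-k) · x^k. (Consistency of the q-deformed coefficients: lim_{q→1} h_j^{m,q}(z) = h_j^m(z).) -/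
open Filter Finset MeasureTheory Topology

noncomputable section

/-- The Laguerre polynomial `L_n^{(α)}(x)` with nonnegative integer parameter `α`. -/
def laguerreL (n α : ℕ) (x : ℝ) : ℝ :=
  ∑ k ∈ Finset.range (n + 1), (-1 : ℝ) ^ k / (k.factorial : ℝ) * ((n + α).choose (n - k) : ℝ) * x ^ k

/-!
Write every q-Pochhammer symbol `(q^c;q)_N` as `(1 - q)^N` times a product of q-numbers
`[e]_q = (1 - q^e)/(1 - q)`. Then all powers of `1 - q` in `h_j^{m,q}(z)` cancel: those of
`√(1 - q)` against the square root of `(q;q)_m (q;q)_j`, and inside the Wall polynomial those of the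
Pochhammer symbols against the argument `(1 - q)|z|²`. What is left is a rational expression in
q-numbers, and `[e]_q → e` as `q → 1` because `[e]_q` is a difference quotient of `q ↦ q^e` at `1`.
In the limit the Wall polynomial becomes `₁F₁(-n; α + 1; x) = L_n^{(α)}(x) / binom(n + α, n)`.
-/

open scoped Nat

section QNumber

variable {K : Type*} [Field K]

def qNum (e : ℤ) (q : K) : K := (1 - q ^ e) / (1 - q)

def qRising (c : ℤ) (N : ℕ) (q : K) : K := ∏ k ∈ range N, qNum (c + k) q

theorem prod_one_sub_zpow_mul_pow {q : K} (h0 : q ≠ 0) (h1 : q ≠ 1) (c : ℤ) (N : ℕ) :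
    ∏ k ∈ range N, (1 - q ^ c * q ^ k) = (1 - q) ^ N * qRising c N q := by
  have h1' : 1 - q ≠ 0 := sub_ne_zero.mpr h1.symm
  calc ∏ k ∈ range N, (1 - q ^ c * q ^ k) = ∏ k ∈ range N, ((1 - q) * qNum (c + k) q) :=
        prod_congr rfl fun k _ => by rw [qNum, mul_div_cancel₀ _ h1', zpow_add₀ h0, zpow_natCast]
    _ = (1 - q) ^ N * qRising c N q := by rw [prod_mul_distrib, prod_const, card_range, qRising]

variable {𝕜 : Type*} [NontriviallyNormedField 𝕜]

theorem qNum_eq_slope (e : ℤ) : qNum e = slope (fun q : 𝕜 => q ^ e) 1 := by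
  ext q
  rw [slope_def_field, one_zpow, qNum, ← neg_div_neg_eq, neg_sub, neg_sub]

theorem tendsto_qNum (e : ℤ) : Tendsto (qNum e) (𝓝[≠] (1 : 𝕜)) (𝓝 (e : 𝕜)) := by
  rw [qNum_eq_slope]
  simpa using hasDerivAt_iff_tendsto_slope.mp (hasDerivAt_zpow e (1 : 𝕜) (Or.inl one_ne_zero))

theorem tendsto_qRising (c : ℤ) (N : ℕ) :
    Tendsto (qRising c N) (𝓝[≠] (1 : 𝕜)) (𝓝 (∏ k ∈ range N, ((c : 𝕜) + k))) := by
  show Tendsto (fun q => ∏ k ∈ range N, qNum (c + k) q) _ _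
  simpa using tendsto_finsetProd (range N) fun k _ => tendsto_qNum (𝕜 := 𝕜) (c + k)

end QNumber

section RisingProducts

variable {R : Type*} [CommRing R]

theorem prod_range_one_add_natCast (k : ℕ) : ∏ i ∈ range k, (1 + (i : R)) = k ! := by
  rw [← prod_range_add_one_eq_factorial]
  push_cast
  simp only [add_comm]

theorem factorial_mul_prod_range_natCast_add (d k : ℕ) :
    (d ! : R) * ∏ i ∈ range k, ((d : R) + 1 + i) = (d + k)! := by
  rw [← Nat.factorial_mul_ascFactorial, Nat.ascFactorial_eq_prod_range]
  push_cast
  simp only [add_right_comm]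

theorem factorial_mul_prod_range_neg_natCast_add {n k : ℕ} (hk : k ≤ n) :
    ((n - k)! : R) * ∏ i ∈ range k, (-(n : R) + i) = (-1) ^ k * n ! := by
  have hprod : ∏ i ∈ range k, (-(n : R) + i) = ∏ i ∈ range k, ((-1) * ((n - i : ℕ) : R)) :=
    prod_congr rfl fun i hi => by
      rw [Nat.cast_sub (by have := mem_range.mp hi; omega)]
      ring
  rw [hprod, prod_mul_distrib, prod_const, card_range, mul_left_comm, ← Nat.cast_prod,
    ← Nat.descFactorial_eq_prod_range, ← Nat.cast_mul, Nat.factorial_mul_descFactorial hk]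

end RisingProducts

-- The hypergeometric form `L_n^{(α)}(x) = binom(n + α, n) · ₁F₁(-n; α + 1; x)`.
theorem laguerreL_div_choose (n d : ℕ) (x : ℝ) :
    laguerreL n d x / (n + d).choose n
      = ∑ k ∈ range (n + 1), (∏ i ∈ range k, (-(n : ℝ) + i))
          / ((∏ i ∈ range k, ((d : ℝ) + 1 + i)) * ∏ i ∈ range k, (1 + (i : ℝ))) * x ^ k := by
  rw [laguerreL, sum_div]
  refine sum_congr rfl fun k hk => ?_
  have hkn : k ≤ n := Nat.lt_succ_iff.mp (mem_range.mp hk)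
  have hdesc : ∏ i ∈ range k, (-(n : ℝ) + i) = (-1) ^ k * n ! / (n - k)! :=
    eq_div_of_mul_eq (by positivity)
      (by rw [mul_comm, factorial_mul_prod_range_neg_natCast_add hkn])
  have hasc : ∏ i ∈ range k, ((d : ℝ) + 1 + i) = (d + k)! / d ! :=
    eq_div_of_mul_eq (by positivity) (by rw [mul_comm, factorial_mul_prod_range_natCast_add])
  rw [hdesc, hasc, prod_range_one_add_natCast, Nat.cast_choose ℝ (by omega : n - k ≤ n + d),
    Nat.cast_choose ℝ (by omega : n ≤ n + d), show n + d - (n - k) = d + k by omega,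
    Nat.add_sub_cancel_left]
  field_simp

section WallPolynomial

theorem qPochC_zpow {w : ℂ} (h0 : w ≠ 0) (h1 : w ≠ 1) (c : ℤ) (N : ℕ) :
    qPochC (w ^ c) w N = (1 - w) ^ N * qRising c N w :=
  prod_one_sub_zpow_mul_pow h0 h1 c N

theorem wallP_one_sub_mul {w : ℂ} (h0 : w ≠ 0) (h1 : w ≠ 1) (n d : ℕ) (X : ℂ) :
    wallP n ((1 - w) * X) (w ^ d) w
      = ∑ k ∈ range (n + 1),
          qRising (-n) k w / (qRising (d + 1) k w * qRising 1 k w) * (w * X) ^ k := by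
  have hw : w ^ d * w = w ^ ((d : ℤ) + 1) := by rw [zpow_add_one₀ h0, zpow_natCast]
  have hu : 1 - w ≠ 0 := sub_ne_zero.mpr h1.symm
  refine sum_congr rfl fun k _ => ?_
  have hself : qPochC w w k = (1 - w) ^ k * qRising 1 k w := by
    simpa using qPochC_zpow h0 h1 1 k
  rw [hw, qPochC_zpow h0 h1, qPochC_zpow h0 h1, hself]
  generalize 1 - w = u at hu ⊢
  calc _ = (u ^ k) ^ 2 * (qRising (-n) k w * (w * X) ^ k)
          / ((u ^ k) ^ 2 * (qRising (d + 1) k w * qRising 1 k w)) := by ring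
    _ = _ := by rw [mul_div_mul_left _ _ (pow_ne_zero 2 (pow_ne_zero k hu))]; ring

theorem tendsto_wallP_laguerreL (n d : ℕ) (x : ℝ) :
    Tendsto (fun w : ℂ => wallP n ((1 - w) * x) (w ^ d) w) (𝓝[≠] 1)
      (𝓝 ((laguerreL n d x / (n + d).choose n : ℝ) : ℂ)) := by
  have hev : ∀ᶠ w in 𝓝[≠] (1 : ℂ), wallP n ((1 - w) * x) (w ^ d) w
      = ∑ k ∈ range (n + 1),
          qRising (-n) k w / (qRising (d + 1) k w * qRising 1 k w) * (w * x) ^ k := by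
    filter_upwards [self_mem_nhdsWithin, nhdsWithin_le_nhds (eventually_ne_nhds one_ne_zero)]
      with w h1 h0 using wallP_one_sub_mul h0 h1 n d x
  have hid : Tendsto (fun w : ℂ => w) (𝓝[≠] 1) (𝓝 1) := nhdsWithin_le_nhds
  have hterm : ∀ k : ℕ, Tendsto
      (fun w : ℂ => qRising (-n) k w / (qRising (d + 1) k w * qRising 1 k w) * (w * x) ^ k)
      (𝓝[≠] 1)
      (𝓝 ((∏ i ∈ range k, (-(n : ℂ) + i))
          / ((∏ i ∈ range k, ((d : ℂ) + 1 + i)) * ∏ i ∈ range k, (1 + (i : ℂ))) * (x : ℂ) ^ k)) := by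
    intro k
    have hden : (∏ i ∈ range k, ((d : ℂ) + 1 + i)) * ∏ i ∈ range k, (1 + (i : ℂ)) ≠ 0 := by
      refine mul_ne_zero (prod_ne_zero_iff.mpr fun i _ => ?_) (prod_ne_zero_iff.mpr fun i _ => ?_)
        <;> norm_cast <;> omega
    have hlim := ((tendsto_qRising (-n) k).div
      ((tendsto_qRising (d + 1) k).mul (tendsto_qRising 1 k)) (by push_cast; exact hden)).mul
      ((hid.mul_const (x : ℂ)).pow k)
    simpa using hlim
  rw [tendsto_congr' hev, laguerreL_div_choose]
  push_cast
  exact tendsto_finsetSum _ fun k _ => hterm k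

end WallPolynomial

section Normalization

def hcoefScale (m j : ℕ) (q : ℝ) : ℝ :=
  q ^ (min m j).choose 2 * qPochR q q (max m j) * √(1 - q) ^ Nat.dist m j
    / (qPochR q q (Nat.dist m j) * √(q ^ (m * j) * qPochR q q m * qPochR q q j))

theorem qPochR_self {q : ℝ} (h0 : q ≠ 0) (h1 : q ≠ 1) (N : ℕ) :
    qPochR q q N = (1 - q) ^ N * qRising 1 N q := by
  rw [qPochR]
  simpa using prod_one_sub_zpow_mul_pow h0 h1 1 N

theorem hcoefScale_eq {q : ℝ} (h0 : q ≠ 0) (h1 : q < 1) (m j : ℕ) :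
    hcoefScale m j q = q ^ (min m j).choose 2 * qRising 1 (max m j) q
      / (qRising 1 (Nat.dist m j) q * √(q ^ (m * j) * qRising 1 m q * qRising 1 j q)) := by
  have hs : √(1 - q) ^ 2 = 1 - q := Real.sq_sqrt (by linarith)
  have hs0 : √(1 - q) ≠ 0 := (Real.sqrt_pos.mpr (by linarith)).ne'
  rw [hcoefScale, qPochR_self h0 h1.ne, qPochR_self h0 h1.ne, qPochR_self h0 h1.ne,
    qPochR_self h0 h1.ne]
  set s := √(1 - q)
  rw [← hs, show q ^ (m * j) * ((s ^ 2) ^ m * qRising 1 m q) * ((s ^ 2) ^ j * qRising 1 j q)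
      = (s ^ (m + j)) ^ 2 * (q ^ (m * j) * qRising 1 m q * qRising 1 j q) by ring,
    Real.sqrt_mul (sq_nonneg _), Real.sqrt_sq (pow_nonneg (Real.sqrt_nonneg _) _)]
  have hexp : 2 * max m j + Nat.dist m j = 2 * Nat.dist m j + (m + j) := by
    unfold Nat.dist; omega
  calc _ = s ^ (2 * max m j + Nat.dist m j) * (q ^ (min m j).choose 2 * qRising 1 (max m j) q)
        / (s ^ (2 * Nat.dist m j + (m + j)) * (qRising 1 (Nat.dist m j) q
          * √(q ^ (m * j) * qRising 1 m q * qRising 1 j q))) := by ring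
    _ = _ := by rw [hexp, mul_div_mul_left _ _ (pow_ne_zero _ hs0)]

theorem tendsto_hcoefScale (m j : ℕ) :
    Tendsto (hcoefScale m j) (𝓝[<] 1)
      (𝓝 ((max m j)! / ((Nat.dist m j)! * √(m ! * j !)))) := by
  have hev : ∀ᶠ q in 𝓝[<] (1 : ℝ), hcoefScale m j q
      = q ^ (min m j).choose 2 * qRising 1 (max m j) q
        / (qRising 1 (Nat.dist m j) q * √(q ^ (m * j) * qRising 1 m q * qRising 1 j q)) := by
    filter_upwards [Ioo_mem_nhdsLT zero_lt_one] with q hq using hcoefScale_eq hq.1.ne' hq.2 m j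
  have hid : Tendsto (fun q : ℝ => q) (𝓝[<] 1) (𝓝 1) := nhdsWithin_le_nhds
  have hfac : ∀ N : ℕ, Tendsto (qRising 1 N) (𝓝[<] (1 : ℝ)) (𝓝 N !) := fun N => by
    simpa [prod_range_one_add_natCast] using
      (tendsto_qRising (𝕜 := ℝ) 1 N).mono_left (nhdsLT_le_nhdsNE 1)
  rw [tendsto_congr' hev]
  have hlim := ((hid.pow ((min m j).choose 2)).mul (hfac (max m j))).div
    ((hfac (Nat.dist m j)).mul (((hid.pow (m * j)).mul (hfac m)).mul (hfac j)).sqrt)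
    (by positivity)
  simp only [one_pow, one_mul] at hlim
  exact hlim

theorem hcoef_eq (q : ℝ) (m j : ℕ) (z : ℂ) :
    hcoef q m j z = (-1) ^ min m j * (hcoefScale m j q : ℂ)
      * (if j ≤ m then (starRingEnd ℂ) z ^ (m - j) else z ^ (j - m))
      * wallP (min m j) ((1 - q) * (‖z‖ ^ 2 : ℝ)) ((q : ℂ) ^ Nat.dist m j) q := by
  have hcast : ∀ (a : ℝ) (N : ℕ), qPochC (a : ℂ) (q : ℂ) N = (qPochR a q N : ℂ) := fun a N => by
    simp [qPochC, qPochR]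
  rw [hcoef, hcoefScale, hcast, hcast]
  push_cast
  ring

end Normalization

/-- Consistency of the q-deformed coefficients: `lim_{q→1⁻} h_j^{m,q}(z) = h_j^m(z)`. -/
theorem hcoef_tendsto_classical (m j : ℕ) (z : ℂ) :
    Tendsto (fun q : ℝ => hcoef q m j z) (𝓝[<] (1 : ℝ))
      (𝓝 ((-1 : ℂ) ^ (min m j) * (((min m j).factorial : ℝ) : ℂ)
        / ((Real.sqrt ((m.factorial : ℝ) * (j.factorial : ℝ)) : ℝ) : ℂ)
        * (if j ≤ m then (starRingEnd ℂ) z ^ (m - j) else z ^ (j - m))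
        * ((laguerreL (min m j) (Nat.dist m j) (‖z‖ ^ 2) : ℝ) : ℂ))) := by
  have hofReal : Tendsto (fun q : ℝ => (q : ℂ)) (𝓝[<] 1) (𝓝[≠] 1) := by
    simpa using Complex.continuous_ofReal.continuousWithinAt.tendsto_nhdsWithin
      (x := 1) (s := Set.Iio 1) (t := {1}ᶜ) fun q hq => by simpa using (Set.mem_Iio.mp hq).ne
  have hlim := ((((tendsto_hcoefScale m j).ofReal.const_mul ((-1 : ℂ) ^ min m j)).mul_const
    (if j ≤ m then (starRingEnd ℂ) z ^ (m - j) else z ^ (j - m))).mul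
    ((tendsto_wallP_laguerreL (min m j) (Nat.dist m j) (‖z‖ ^ 2)).comp hofReal))
  have hmax : max m j = min m j + Nat.dist m j := by unfold Nat.dist; omega
  convert hlim using 2
  · exact hcoef_eq _ m j z
  · rw [hmax, Nat.cast_choose ℝ (Nat.le_add_right _ _), Nat.add_sub_cancel_left]
    have hfac : ∀ N : ℕ, (N ! : ℂ) ≠ 0 := fun N => Nat.cast_ne_zero.mpr N.factorial_ne_zero
    push_cast
    field_simp [hfac]
end
end

section
/- Let z∈ℂ and ξ∈ℝ. Then lim_{q→1⁻} ∏_{k=0}^∞ ( 1 - √2·z·ξ·q^k(1-q) + z²·q^{2k}(1-q) )^{-1} = exp( √2·ξ·z - z²/2 ), where for each q sufficiently close to 1 the infinite product converges and is nonzero. -/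
open Filter Finset MeasureTheory Topology

noncomputable section

/-! Write the `k`-th factor as `1 + dₖ`; with `C = √2 |ξ| ‖z‖ + ‖z‖²` one has
`‖dₖ‖ ≤ C (1 - q) qᵏ`, so the product equals `exp (-∑ₖ log (1 + dₖ))`. The sum `∑ₖ dₖ` is a
pair of geometric series, equal to `z² / (1 + q) - √2 ξ z`, while the remainder
`∑ₖ (log (1 + dₖ) - dₖ)` is bounded by `∑ₖ ‖dₖ‖² ≤ C² (1 - q)`. Letting `q → 1⁻` gives
`exp (√2 ξ z - z² / 2)`. -/

namespace Complex

theorem norm_log_one_add_sub_self_le_sq {z : ℂ} (hz : ‖z‖ ≤ 1 / 2) :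
    ‖log (1 + z) - z‖ ≤ ‖z‖ ^ 2 := by
  have hinv : (1 - ‖z‖)⁻¹ ≤ 2 := by
    rw [inv_le_comm₀ (by linarith) two_pos]
    linarith
  calc ‖log (1 + z) - z‖ ≤ ‖z‖ ^ 2 * (1 - ‖z‖)⁻¹ / 2 :=
        norm_log_one_add_sub_self_le (hz.trans_lt one_half_lt_one)
    _ ≤ ‖z‖ ^ 2 * 2 / 2 := by gcongr
    _ = ‖z‖ ^ 2 := by ring

theorem norm_tsum_log_one_add_sub_self_le {ι : Type*} {d : ι → ℂ} {g : ι → ℝ} {a : ℝ}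
    (hg : HasSum g a) (hd : ∀ i, ‖d i‖ ≤ 1 / 2) (hdg : ∀ i, ‖d i‖ ^ 2 ≤ g i) :
    ‖∑' i, (log (1 + d i) - d i)‖ ≤ a :=
  tsum_of_norm_bounded hg fun i => (norm_log_one_add_sub_self_le_sq (hd i)).trans (hdg i)

theorem hasProd_inv_one_add {ι : Type*} {d : ι → ℂ} (hd : Summable d)
    (hne : ∀ i, 1 + d i ≠ 0) :
    HasProd (fun i => (1 + d i)⁻¹) (exp (-(∑' i, d i) - ∑' i, (log (1 + d i) - d i))) := by
  have hlog := summable_log_one_add_of_summable hd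
  rw [hlog.tsum_sub hd, neg_sub_left, sub_add_cancel]
  refine hlog.hasSum.neg.cexp.congr_fun fun i => ?_
  simp only [Function.comp_apply, exp_neg, exp_log (hne i)]

end Complex

theorem tendsto_one_sub_nhdsLT_one : Tendsto (fun q : ℝ => 1 - q) (𝓝[<] 1) (𝓝 0) := by
  simpa using ((continuous_sub_left (1 : ℝ)).tendsto 1).mono_left nhdsWithin_le_nhds

section qFactor

variable (a b : ℂ) (q : ℝ)

-- Written with the casts of the theorem, whose factors are then `qFactor (√2 z ξ) (z²) q k`
-- by definition.
def qFactor (k : ℕ) : ℂ :=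
  1 - a * (q : ℂ) ^ k * ((1 - q : ℝ) : ℂ) + b * (q : ℂ) ^ (2 * k) * ((1 - q : ℝ) : ℂ)

def qDev (k : ℕ) : ℂ :=
  (b * ((q : ℂ) ^ 2) ^ k - a * (q : ℂ) ^ k) * ((1 - q : ℝ) : ℂ)

def qErr : ℂ :=
  ∑' k, (Complex.log (1 + qDev a b q k) - qDev a b q k)

theorem qFactor_eq_one_add_qDev (k : ℕ) : qFactor a b q k = 1 + qDev a b q k := by
  rw [qFactor, qDev, pow_mul]
  ring

variable {a b q}

theorem norm_qDev_le (hq0 : 0 ≤ q) (hq1 : q ≤ 1) (k : ℕ) :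
    ‖qDev a b q k‖ ≤ (‖a‖ + ‖b‖) * (1 - q) * q ^ k := by
  have hqk : q ^ k * q ^ k ≤ q ^ k :=
    mul_le_of_le_one_left (by positivity) (pow_le_one₀ hq0 hq1)
  have hnorm_q : ‖(q : ℂ)‖ = q := by simp [abs_of_nonneg hq0]
  calc ‖qDev a b q k‖ ≤ (‖b‖ * (q ^ k * q ^ k) + ‖a‖ * q ^ k) * (1 - q) := by
        rw [qDev, norm_mul, Complex.norm_real, Real.norm_of_nonneg (by linarith), ← pow_mul,
          mul_comm 2 k, pow_mul]
        gcongr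
        refine (norm_sub_le _ _).trans_eq ?_
        simp only [norm_mul, norm_pow, hnorm_q]
        ring
    _ ≤ (‖b‖ * q ^ k + ‖a‖ * q ^ k) * (1 - q) := by gcongr
    _ = (‖a‖ + ‖b‖) * (1 - q) * q ^ k := by ring

theorem norm_qDev_le_half (hq0 : 0 ≤ q) (hq1 : q ≤ 1)
    (hsmall : (‖a‖ + ‖b‖) * (1 - q) ≤ 1 / 2) (k : ℕ) : ‖qDev a b q k‖ ≤ 1 / 2 :=
  ((norm_qDev_le hq0 hq1 k).trans (mul_le_of_le_one_right
    (mul_nonneg (by positivity) (sub_nonneg.mpr hq1)) (pow_le_one₀ hq0 hq1))).trans hsmall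

theorem hasSum_qDev (hq0 : 0 ≤ q) (hq1 : q < 1) : HasSum (qDev a b q) (b / (1 + q) - a) := by
  have hq : ‖(q : ℂ)‖ < 1 := by simpa [abs_of_nonneg hq0] using hq1
  have hq2 : ‖(q : ℂ) ^ 2‖ < 1 := by
    rw [norm_pow]
    exact pow_lt_one₀ (norm_nonneg _) hq two_ne_zero
  have hsum := (((hasSum_geometric_of_norm_lt_one hq2).mul_left b).sub
    ((hasSum_geometric_of_norm_lt_one hq).mul_left a)).mul_right ((1 - q : ℝ) : ℂ)
  have h1 : (1 : ℂ) - q ≠ 0 := by exact_mod_cast (sub_pos.mpr hq1).ne'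
  have h2 : (1 : ℂ) + q ≠ 0 := by exact_mod_cast (by linarith : (0 : ℝ) < 1 + q).ne'
  have hval : b / (1 + q) - a
      = (b * (1 - (q : ℂ) ^ 2)⁻¹ - a * (1 - (q : ℂ))⁻¹) * ((1 - q : ℝ) : ℂ) := by
    rw [show (1 : ℂ) - q ^ 2 = (1 - q) * (1 + q) by ring]
    push_cast
    field_simp
  rw [hval]
  exact hsum

variable (a b) in
theorem eventually_qDev_small :
    ∀ᶠ q : ℝ in 𝓝[<] 1, 0 ≤ q ∧ q < 1 ∧ (‖a‖ + ‖b‖) * (1 - q) ≤ 1 / 2 := by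
  have hlim : Tendsto (fun q : ℝ => (‖a‖ + ‖b‖) * (1 - q)) (𝓝[<] 1) (𝓝 0) := by
    simpa using tendsto_one_sub_nhdsLT_one.const_mul (‖a‖ + ‖b‖)
  filter_upwards [Ioo_mem_nhdsLT zero_lt_one, hlim.eventually_le_const one_half_pos]
    with q hq hsmall
  exact ⟨hq.1.le, hq.2, hsmall⟩

theorem norm_qErr_le (hq0 : 0 ≤ q) (hq1 : q < 1) (hsmall : (‖a‖ + ‖b‖) * (1 - q) ≤ 1 / 2) :
    ‖qErr a b q‖ ≤ (‖a‖ + ‖b‖) ^ 2 * (1 - q) := by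
  set ε := (‖a‖ + ‖b‖) * (1 - q) with hε
  have hgeom := (hasSum_geometric_of_lt_one hq0 hq1).mul_left (ε ^ 2)
  have hval : ε ^ 2 * (1 - q)⁻¹ = (‖a‖ + ‖b‖) ^ 2 * (1 - q) := by
    have : 1 - q ≠ 0 := (sub_pos.mpr hq1).ne'
    rw [hε]
    field_simp
  rw [← hval]
  refine Complex.norm_tsum_log_one_add_sub_self_le hgeom
    (norm_qDev_le_half hq0 hq1.le hsmall) fun k => ?_
  calc ‖qDev a b q k‖ ^ 2 ≤ (ε * q ^ k) ^ 2 := by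
        gcongr
        exact norm_qDev_le hq0 hq1.le k
    _ = ε ^ 2 * (q ^ k * q ^ k) := by ring
    _ ≤ ε ^ 2 * q ^ k := by
        gcongr
        exact mul_le_of_le_one_left (by positivity) (pow_le_one₀ hq0 hq1.le)

theorem hasProd_inv_qFactor (hq0 : 0 ≤ q) (hq1 : q < 1)
    (hsmall : (‖a‖ + ‖b‖) * (1 - q) ≤ 1 / 2) :
    HasProd (fun k => (qFactor a b q k)⁻¹) (Complex.exp (a - b / (1 + q) - qErr a b q)) := by
  have hne : ∀ k, 1 + qDev a b q k ≠ 0 := by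
    intro k h
    have hdev := norm_qDev_le_half hq0 hq1.le hsmall k
    rw [eq_neg_of_add_eq_zero_right h, norm_neg, norm_one] at hdev
    norm_num at hdev
  have hsum := hasSum_qDev (a := a) (b := b) hq0 hq1
  have hprod := Complex.hasProd_inv_one_add hsum.summable hne
  rw [hsum.tsum_eq, neg_sub] at hprod
  simpa only [qFactor_eq_one_add_qDev, qErr] using hprod

variable (a b)

theorem tendsto_qErr : Tendsto (qErr a b) (𝓝[<] 1) (𝓝 0) := by
  have hbound : Tendsto (fun q : ℝ => (‖a‖ + ‖b‖) ^ 2 * (1 - q)) (𝓝[<] 1) (𝓝 0) := by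
    simpa using tendsto_one_sub_nhdsLT_one.const_mul ((‖a‖ + ‖b‖) ^ 2)
  refine squeeze_zero_norm' ?_ hbound
  filter_upwards [eventually_qDev_small a b] with q ⟨hq0, hq1, hsmall⟩
  exact norm_qErr_le hq0 hq1 hsmall

theorem tendsto_tprod_inv_qFactor :
    Tendsto (fun q : ℝ => ∏' k, (qFactor a b q k)⁻¹) (𝓝[<] 1)
      (𝓝 (Complex.exp (a - b / 2))) := by
  have hq : Tendsto (fun q : ℝ => (1 : ℂ) + q) (𝓝[<] 1) (𝓝 2) := by
    have hofReal : Tendsto (fun q : ℝ => (q : ℂ)) (𝓝[<] 1) (𝓝 1) := by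
      simpa using (Complex.continuous_ofReal.tendsto 1).mono_left nhdsWithin_le_nhds
    simpa [one_add_one_eq_two] using hofReal.const_add 1
  have hexp := ((tendsto_const_nhds (x := a)).sub ((tendsto_const_nhds (x := b)).div hq
    two_ne_zero) |>.sub (tendsto_qErr a b)).cexp
  rw [sub_zero] at hexp
  refine hexp.congr' ?_
  filter_upwards [eventually_qDev_small a b] with q ⟨hq0, hq1, hsmall⟩
  exact (hasProd_inv_qFactor hq0 hq1 hsmall).tprod_eq.symm

end qFactor

/-- The infinite product converges near `q = 1⁻`, is nonzero there, and tends to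
`exp(√2 ξ z - z²/2)` as `q → 1⁻`. -/
theorem infinite_product_tendsto_exp (z : ℂ) (ξ : ℝ) :
    (∀ᶠ q : ℝ in 𝓝[<] (1 : ℝ),
        Multipliable (fun k : ℕ =>
          (1 - ((Real.sqrt 2 : ℝ) : ℂ) * z * (ξ : ℂ) * (q : ℂ) ^ k * ((1 - q : ℝ) : ℂ)
            + z ^ 2 * (q : ℂ) ^ (2 * k) * ((1 - q : ℝ) : ℂ))⁻¹)
        ∧ (∏' k : ℕ,
            (1 - ((Real.sqrt 2 : ℝ) : ℂ) * z * (ξ : ℂ) * (q : ℂ) ^ k * ((1 - q : ℝ) : ℂ)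
              + z ^ 2 * (q : ℂ) ^ (2 * k) * ((1 - q : ℝ) : ℂ))⁻¹) ≠ 0)
    ∧ Tendsto (fun q : ℝ =>
        ∏' k : ℕ,
          (1 - ((Real.sqrt 2 : ℝ) : ℂ) * z * (ξ : ℂ) * (q : ℂ) ^ k * ((1 - q : ℝ) : ℂ)
            + z ^ 2 * (q : ℂ) ^ (2 * k) * ((1 - q : ℝ) : ℂ))⁻¹)
        (𝓝[<] (1 : ℝ))
        (𝓝 (Complex.exp (((Real.sqrt 2 : ℝ) : ℂ) * (ξ : ℂ) * z - z ^ 2 / 2))) := by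
  rw [show ((Real.sqrt 2 : ℝ) : ℂ) * ξ * z = (Real.sqrt 2 : ℝ) * z * ξ by ring]
  refine ⟨?_, tendsto_tprod_inv_qFactor _ _⟩
  filter_upwards [eventually_qDev_small ((Real.sqrt 2 : ℝ) * z * ξ) (z ^ 2)]
    with q ⟨hq0, hq1, hsmall⟩
  have hprod := hasProd_inv_qFactor hq0 hq1 hsmall
  exact ⟨hprod.multipliable, hprod.tprod_eq ▸ Complex.exp_ne_zero _⟩
end
end

section
/- Let n∈ℕ, α>-1 a real number, and x∈ℝ. Then lim_{q→1⁻} ∑_{k=0}^n (q^{-n};q)_k / ( (q^{α+1};q)_k (q;q)_k ) · ( q(1-q)x )^k = ∑_{k=0}^n (-n)_k/(α+1)_k · x^k/k! = n!/(α+1)_n · L_n^{(α)}(x), where (a)_k = a(a+1)···(a+k-1) is the Pochhammer symbol and L_n^{(α)}(x) = ∑_{k=0}^n (-1)^k/k! · (α+k+1)_{n-k}/(n-k)! · x^k is the Laguerre polynomial. (The q-hypergeometric sum defining the Wall polynomial converges, as q→1, to the ₁F₁ form of the Laguerre polynomial.) -/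
open Filter Finset MeasureTheory Topology

noncomputable section

/-- The Pochhammer symbol `(a)_k = a(a+1)⋯(a+k-1)` for real `a`. -/
def pochR (a : ℝ) (k : ℕ) : ℝ := ∏ i ∈ Finset.range k, (a + i)

/-!
For `q ∈ (0, 1)`, `(q^a; q)_k / (1 - q)^k = ∏_{i<k} [a + i]_q` with the `q`-number
`[b]_q = (1 - q^b)/(1 - q)`, and `[b]_q → b` as `q → 1⁻` because `b` is the derivative of `q ↦ q^b`
at `1`. Distributing the factor `(1 - q)^k` of `(q(1 - q)x)^k` over the three `q`-Pochhammer
symbols, each term of the sum tends to `(-n)_k / ((α+1)_k k!) · x^k`; the denominators stay away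
from `0` because `α + 1 > 0`. The Laguerre form follows from `(-n)_k = (-1)^k n!/(n-k)!` and
`(α+1)_n = (α+1)_k (α+k+1)_{n-k}`.
-/

lemma pochR_ne_zero {a : ℝ} (ha : 0 < a) (k : ℕ) : pochR a k ≠ 0 :=
  prod_ne_zero_iff.2 fun i _ => by positivity

lemma pochR_add (a : ℝ) (m l : ℕ) : pochR a (m + l) = pochR a m * pochR (a + m) l := by
  rw [pochR, prod_range_add]
  exact congrArg _ (prod_congr rfl fun i _ => by push_cast; ring)

lemma pochR_one (k : ℕ) : pochR 1 k = k.factorial := by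
  rw [pochR, ← prod_range_add_one_eq_factorial]
  push_cast
  exact prod_congr rfl fun i _ => add_comm _ _

lemma pochR_neg_natCast (n k : ℕ) : pochR (-(n : ℝ)) k = (-1) ^ k * n.descFactorial k := by
  induction k with
  | zero => simp [pochR]
  | succ k ih =>
    rw [pochR, prod_range_succ, ← pochR, ih, Nat.descFactorial_succ]
    rcases le_or_gt k n with h | h
    · push_cast [h]
      ring
    · simp [Nat.descFactorial_eq_zero_iff_lt.2 h]

lemma tendsto_one_sub_rpow_div_one_sub (a : ℝ) :
    Tendsto (fun q : ℝ => (1 - q ^ a) / (1 - q)) (𝓝[<] 1) (𝓝 a) := by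
  have hderiv : HasDerivAt (fun q : ℝ => q ^ a) a 1 := by
    simpa using Real.hasDerivAt_rpow_const (x := 1) (p := a) (Or.inl one_ne_zero)
  refine ((hasDerivAt_iff_tendsto_slope.mp hderiv).mono_left
    (nhdsWithin_mono _ fun _ hq => ne_of_lt hq)).congr fun q => ?_
  rw [slope_def_field, Real.one_rpow, ← neg_div_neg_eq]
  ring_nf

lemma qPochR_rpow_eq_prod {q : ℝ} (hq : 0 < q) (a : ℝ) (k : ℕ) :
    qPochR (q ^ a) q k = ∏ i ∈ range k, (1 - q ^ (a + i)) :=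
  prod_congr rfl fun i _ => by rw [Real.rpow_add hq, Real.rpow_natCast]

lemma tendsto_qPochR_rpow_div_pow (a : ℝ) (k : ℕ) :
    Tendsto (fun q : ℝ => qPochR (q ^ a) q k / (1 - q) ^ k) (𝓝[<] 1) (𝓝 (pochR a k)) := by
  have hprod : Tendsto (fun q : ℝ => ∏ i ∈ range k, (1 - q ^ (a + i)) / (1 - q))
      (𝓝[<] 1) (𝓝 (pochR a k)) :=
    tendsto_finsetProd _ fun i _ => tendsto_one_sub_rpow_div_one_sub (a + i)
  refine hprod.congr' ?_
  filter_upwards [Ioo_mem_nhdsLT (zero_lt_one' ℝ)] with q hq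
  rw [qPochR_rpow_eq_prod hq.1, prod_div_distrib, prod_const, card_range]

lemma tendsto_qHypergeometric_term (a b x : ℝ) {k : ℕ} (hb : pochR b k ≠ 0) :
    Tendsto (fun q : ℝ => qPochR (q ^ a) q k / (qPochR (q ^ b) q k * qPochR q q k)
        * (q * (1 - q) * x) ^ k)
      (𝓝[<] 1) (𝓝 (pochR a k / pochR b k * x ^ k / k.factorial)) := by
  have hpow : Tendsto (fun q : ℝ => (q * x) ^ k) (𝓝[<] 1) (𝓝 (x ^ k)) :=
    (((continuous_id.mul continuous_const).pow k).tendsto' 1 (x ^ k) (by simp)).mono_left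
      nhdsWithin_le_nhds
  have hlim := ((tendsto_qPochR_rpow_div_pow a k).div
    ((tendsto_qPochR_rpow_div_pow b k).mul (tendsto_qPochR_rpow_div_pow 1 k))
    (mul_ne_zero hb (pochR_one k ▸ Nat.cast_ne_zero.2 k.factorial_ne_zero))).mul hpow
  rw [pochR_one] at hlim
  rw [show pochR a k / pochR b k * x ^ k / k.factorial
      = pochR a k / (pochR b k * k.factorial) * x ^ k by ring]
  refine hlim.congr' ?_
  filter_upwards [self_mem_nhdsWithin] with q hq
  have hq' : (1 - q) ^ k ≠ 0 := pow_ne_zero _ (sub_ne_zero.2 (ne_of_lt hq).symm)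
  simp only [Pi.div_apply, Real.rpow_one]
  rw [mul_pow, mul_pow, mul_pow]
  field_simp

lemma pochR_neg_natCast_div_eq {a : ℝ} (ha : 0 < a) {n k : ℕ} (hk : k ≤ n) (x : ℝ) :
    pochR (-(n : ℝ)) k / pochR a k * x ^ k / k.factorial
      = n.factorial / pochR a n
          * ((-1) ^ k / k.factorial * (pochR (a + k) (n - k) / (n - k).factorial) * x ^ k) := by
  have hsplit : pochR a n = pochR a k * pochR (a + k) (n - k) := by
    rw [← pochR_add, Nat.add_sub_cancel' hk]
  have hfact : ((n - k).factorial : ℝ) * n.descFactorial k = n.factorial := by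
    rw [← Nat.cast_mul, Nat.factorial_mul_descFactorial hk]
  have hk₀ := pochR_ne_zero ha k
  have hnk₀ := pochR_ne_zero (by positivity : 0 < a + k) (n - k)
  rw [hsplit, pochR_neg_natCast, ← hfact]
  field_simp

/-- The q-hypergeometric sum defining the Wall polynomial converges, as `q → 1⁻`,
to the ₁F₁ form of the Laguerre polynomial. -/
theorem wall_sum_tendsto_laguerre (n : ℕ) (α : ℝ) (hα : -1 < α) (x : ℝ) :
    Tendsto (fun q : ℝ =>
        ∑ k ∈ Finset.range (n + 1),
          qPochR (q ^ (-(n : ℤ))) q k / (qPochR (q ^ (α + 1)) q k * qPochR q q k)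
            * (q * (1 - q) * x) ^ k)
      (𝓝[<] (1 : ℝ))
      (𝓝 (∑ k ∈ Finset.range (n + 1), pochR (-(n : ℝ)) k / pochR (α + 1) k * x ^ k / (k.factorial : ℝ)))
    ∧ (∑ k ∈ Finset.range (n + 1), pochR (-(n : ℝ)) k / pochR (α + 1) k * x ^ k / (k.factorial : ℝ))
        = (n.factorial : ℝ) / pochR (α + 1) n
            * ∑ k ∈ Finset.range (n + 1),
                (-1 : ℝ) ^ k / (k.factorial : ℝ)
                  * (pochR (α + k + 1) (n - k) / ((n - k).factorial : ℝ)) * x ^ k := by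
  have hα₁ : 0 < α + 1 := by linarith
  have hzpow : ∀ q : ℝ, q ^ (-(n : ℤ)) = q ^ (-(n : ℝ)) := fun q => by
    rw [← Real.rpow_intCast]
    push_cast
    rfl
  refine ⟨?_, ?_⟩
  · simp only [hzpow]
    exact tendsto_finsetSum _ fun k _ =>
      tendsto_qHypergeometric_term _ _ x (pochR_ne_zero hα₁ k)
  · rw [mul_sum]
    refine sum_congr rfl fun k hk => ?_
    rw [add_right_comm α, pochR_neg_natCast_div_eq hα₁ (Nat.lt_succ_iff.1 (mem_range.1 hk))]
end
end

section
/- Let 0<q<1, m∈ℕ, x∈ℂ, and a∈ℂ with (aq;q)_k ≠ 0 for all 1≤k≤m. Then P_m(x;a|q) = (aq;q)_m^{-1} · ∑_{r≥0, k≥0, r+k≤m} (q^{-m};q)_{r+k} · (qx)^r/(q;q)_r · (a q^{m+1})^k/(q;q)_k, where P_m is the Wall polynomial. (The double-sum representation of the Wall polynomial used in the proof of Proposition 1.1; the paper applies it with a = q^{j-m} for j ≥ m. Note the double sum is finite since (q^{-m};q)_{r+k} = 0 whenever r+k > m.) -/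
/-! Splitting `(q^{-m};q)_{r+k} = (q^{-m};q)_r (q^{r-m};q)_k`, the inner sum over `k` of the
double sum is a terminating q-binomial sum; it equals `(aq^{r+1};q)_{m-r} = (aq;q)_m / (aq;q)_r`,
and what is left is the single sum defining `P_m(x;a|q)`. -/

open Filter Finset MeasureTheory Topology

noncomputable section

lemma qPochC_succ' (a q : ℂ) (n : ℕ) : qPochC a q (n + 1) = (1 - a) * qPochC (a * q) q n := by
  rw [qPochC, prod_range_succ', pow_zero, mul_one, mul_comm]
  exact congrArg _ (prod_congr rfl fun i _ => by ring)

lemma qPochC_add (a q : ℂ) (m n : ℕ) :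
    qPochC a q (m + n) = qPochC a q m * qPochC (a * q ^ m) q n := by
  rw [qPochC, prod_range_add]
  exact congrArg _ (prod_congr rfl fun i _ => by ring)

lemma qPochC_ne_zero_of_le {a q : ℂ} {m n : ℕ} (h : qPochC a q n ≠ 0) (hmn : m ≤ n) :
    qPochC a q m ≠ 0 := by
  obtain ⟨j, rfl⟩ := Nat.exists_eq_add_of_le hmn
  exact left_ne_zero_of_mul (qPochC_add a q m j ▸ h)

lemma qPochC_self_ne_zero {q : ℝ} (hq0 : 0 < q) (hq1 : q < 1) (n : ℕ) :
    qPochC (q : ℂ) (q : ℂ) n ≠ 0 := by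
  refine prod_ne_zero_iff.mpr fun i _ => ?_
  have : q * q ^ i < 1 := by
    simpa only [pow_succ'] using pow_lt_one₀ hq0.le hq1 (Nat.succ_ne_zero i)
  exact_mod_cast sub_ne_zero.mpr this.ne'

/-- `(-1)^k q^(k(k-1)/2)` times the Gaussian binomial coefficient `[n, k]_q`. -/
def signedGaussBinom (q : ℂ) (n k : ℕ) : ℂ :=
  (∏ i ∈ range k, (q ^ n - q ^ i)) / qPochC q q k

lemma signedGaussBinom_zero_right (q : ℂ) (n : ℕ) : signedGaussBinom q n 0 = 1 := by
  simp [signedGaussBinom, qPochC]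

lemma signedGaussBinom_succ_self (q : ℂ) (n : ℕ) : signedGaussBinom q n (n + 1) = 0 := by
  rw [signedGaussBinom, prod_eq_zero (self_mem_range_succ n) (sub_self _), zero_div]

lemma prod_pow_sub_pow_succ (q : ℂ) (n k : ℕ) :
    ∏ i ∈ range (k + 1), (q ^ (n + 1) - q ^ i)
      = (q ^ (n + 1) - 1) * q ^ k * ∏ i ∈ range k, (q ^ n - q ^ i) := by
  have hshift : ∏ i ∈ range k, (q ^ (n + 1) - q ^ (i + 1))
      = ∏ i ∈ range k, (q * (q ^ n - q ^ i)) :=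
    prod_congr rfl fun i _ => by ring
  rw [prod_range_succ', hshift, prod_mul_distrib, prod_const, card_range]
  ring

lemma signedGaussBinom_succ_succ (q : ℂ) (n k : ℕ) (hk : qPochC q q (k + 1) ≠ 0) :
    signedGaussBinom q (n + 1) (k + 1)
      = signedGaussBinom q n (k + 1) * q ^ (k + 1) - signedGaussBinom q n k * q ^ k := by
  have hsucc : qPochC q q (k + 1) = qPochC q q k * (1 - q * q ^ k) := prod_range_succ _ k
  have hfac : 1 - q * q ^ k ≠ 0 := right_ne_zero_of_mul (hsucc ▸ hk)
  rw [signedGaussBinom, signedGaussBinom, signedGaussBinom, hsucc, prod_pow_sub_pow_succ,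
    prod_range_succ]
  simp only [div_eq_mul_inv, mul_inv]
  linear_combination -(q ^ k * (∏ i ∈ range k, (q ^ n - q ^ i)) * (qPochC q q k)⁻¹)
    * mul_inv_cancel₀ hfac

theorem qPochC_eq_sum_signedGaussBinom (q w : ℂ) (n : ℕ) (hq : qPochC q q n ≠ 0) :
    qPochC w q n = ∑ k ∈ range (n + 1), signedGaussBinom q n k * w ^ k := by
  induction n generalizing w with
  | zero => simp [signedGaussBinom_zero_right, qPochC]
  | succ n ih =>
    set f : ℕ → ℂ := fun k => signedGaussBinom q n k * q ^ k * w ^ k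
    have hshift : ∑ k ∈ range (n + 1), f (k + 1) = ∑ k ∈ range (n + 1), f k - 1 := by
      have := sum_range_succ' f (n + 1)
      simp only [sum_range_succ _ (n + 1), f, signedGaussBinom_succ_self,
        signedGaussBinom_zero_right] at this
      linear_combination -this
    have hrec : ∀ k ∈ range (n + 1),
        signedGaussBinom q (n + 1) (k + 1) * w ^ (k + 1) = f (k + 1) - f k * w := fun k hk => by
      rw [signedGaussBinom_succ_succ q n k (qPochC_ne_zero_of_le hq (by simpa using hk))]
      ring
    have hih : qPochC (w * q) q n = ∑ k ∈ range (n + 1), f k := by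
      rw [ih (w * q) (qPochC_ne_zero_of_le hq n.le_succ)]
      exact sum_congr rfl fun k _ => by ring
    rw [qPochC_succ', hih, sum_range_succ' _ (n + 1), sum_congr rfl hrec, sum_sub_distrib,
      ← sum_mul, hshift, signedGaussBinom_zero_right]
    ring

lemma prod_pow_sub_pow_eq_qPochC {q : ℂ} (hq : q ≠ 0) (n k : ℕ) :
    ∏ i ∈ range k, (q ^ n - q ^ i) = qPochC (q ^ (-(n : ℤ))) q k * (q ^ n) ^ k := by
  rw [qPochC, ← card_range k, ← prod_const, card_range, ← prod_mul_distrib]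
  refine prod_congr rfl fun i _ => ?_
  rw [zpow_neg, zpow_natCast]
  field_simp

lemma qPochC_eq_sum_zpow {q : ℂ} (hq : q ≠ 0) (z : ℂ) (n : ℕ) (hqq : qPochC q q n ≠ 0) :
    qPochC z q n
      = ∑ k ∈ range (n + 1),
          qPochC (q ^ (-(n : ℤ))) q k / qPochC q q k * (z * q ^ n) ^ k := by
  rw [qPochC_eq_sum_signedGaussBinom q z n hqq]
  refine sum_congr rfl fun k _ => ?_
  rw [signedGaussBinom, prod_pow_sub_pow_eq_qPochC hq]
  ring

lemma qPochC_mul_sum_qPochC_add {q : ℂ} (hq : q ≠ 0) (a : ℂ) (r n : ℕ)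
    (hqq : qPochC q q n ≠ 0) :
    qPochC (a * q) q r * ∑ k ∈ range (n + 1),
        qPochC (q ^ (-((r + n : ℕ) : ℤ))) q (r + k) * (a * q ^ (r + n + 1)) ^ k / qPochC q q k
      = qPochC (q ^ (-((r + n : ℕ) : ℤ))) q r * qPochC (a * q) q (r + n) := by
  have hshift : q ^ (-((r + n : ℕ) : ℤ)) * q ^ r = q ^ (-(n : ℤ)) := by
    rw [← zpow_natCast q r, ← zpow_add₀ hq]
    congr 1
    push_cast
    ring
  have hbase : a * q * q ^ r * q ^ n = a * q ^ (r + n + 1) := by ring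
  rw [qPochC_add (a * q), qPochC_eq_sum_zpow hq _ n hqq, hbase, mul_sum, mul_sum, mul_sum]
  refine sum_congr rfl fun k _ => ?_
  rw [qPochC_add, hshift]
  ring

/-- The double-sum representation of the Wall polynomial. -/
theorem wall_double_sum (q : ℝ) (hq0 : 0 < q) (hq1 : q < 1) (m : ℕ) (x a : ℂ)
    (ha : ∀ k : ℕ, 1 ≤ k → k ≤ m → qPochC (a * (q : ℂ)) (q : ℂ) k ≠ 0) :
    wallP m x a (q : ℂ)
      = (qPochC (a * (q : ℂ)) (q : ℂ) m)⁻¹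
          * ∑ r ∈ Finset.range (m + 1), ∑ k ∈ Finset.range (m + 1 - r),
              qPochC ((q : ℂ) ^ (-(m : ℤ))) (q : ℂ) (r + k)
                * ((q : ℂ) * x) ^ r / qPochC (q : ℂ) (q : ℂ) r
                * (a * (q : ℂ) ^ (m + 1)) ^ k / qPochC (q : ℂ) (q : ℂ) k := by
  have hq : (q : ℂ) ≠ 0 := by exact_mod_cast hq0.ne'
  have haq : ∀ r ≤ m, qPochC (a * q) q r ≠ 0 := fun r hr =>
    r.eq_zero_or_pos.elim (fun h => by simp [h, qPochC]) (ha r · hr)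
  rw [wallP, mul_sum]
  refine sum_congr rfl fun r hr => ?_
  obtain ⟨n, rfl⟩ := Nat.exists_eq_add_of_le (Nat.lt_succ_iff.mp (mem_range.mp hr))
  set c : ℂ := (q : ℂ) ^ (-((r + n : ℕ) : ℤ))
  set w : ℂ := a * q ^ (r + n + 1)
  have hfactor : ∑ k ∈ range (n + 1), qPochC c q (r + k) * (q * x) ^ r / qPochC q q r
        * w ^ k / qPochC q q k
      = (q * x) ^ r / qPochC q q r
          * ∑ k ∈ range (n + 1), qPochC c q (r + k) * w ^ k / qPochC q q k := by
    rw [mul_sum]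
    exact sum_congr rfl fun k _ => by ring
  rw [show r + n + 1 - r = n + 1 by omega, hfactor, eq_div_of_mul_eq (haq r (r.le_add_right n))
    ((mul_comm _ _).trans (qPochC_mul_sum_qPochC_add hq a r n (qPochC_self_ne_zero hq0 hq1 n)))]
  field_simp [haq _ le_rfl]
  ring
end
end
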